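/- For a collection φ of subsets of X, the following statements are equivalent: (i) φ is an F-ultrafilter on X; (ii) φ is an F-filter on X and, whenever X(f,r) ∉ φ for some f ∈ F and r > 0, then for every real t with 0 < t < r there exists A ∈ φ with X(f,t) ∩ A = ∅; (iii) φ is a maximal (with respect to inclusion) collection of subsets of X which is an F-family on X and has the finite intersection property; (iv) φ is an F-filter on X and, whenever A₁ ∪ ⋯ ∪ Aₙ ∈ φ for some n ∈ ℕ and subsets A₁,…,Aₙ of X, there exists k ∈ {1,…,n} such that X(f,r) ∈ φ for every f ∈ Z(Aₖ) and every r > 0; (v) φ is an F-filter on X and, for every non-empty subset A of X with A ≠ X, either X(f,r) ∈ φ for every f ∈ Z(A) and every r > 0, or X(g,r) ∈ φ for every g ∈ Z(X∖A) and every r > 0. -/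

import Mathlib

open Set

variable {X : Type*} [Nonempty X] [TopologicalSpace X] [DiscreteTopology X]

/-- The set `X(f,r) = {x ∈ X : |f(x)| ≤ r}`. -/
def XSet (f : BoundedContinuousFunction X ℂ) (r : ℝ) : Set X := {x | ‖f x‖ ≤ r}

/-- An `F`-family on `X`: a nonempty collection of nonempty subsets of `X` such that for every
member `A ≠ X` there are `B` in the collection and `f ∈ F` with `f(B) = {0}`,
`f(X \ A) = {1}`. -/
def FFamily (F : StarSubalgebra ℂ (BoundedContinuousFunction X ℂ)) (𝒜 : Set (Set X)) : Prop :=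
  𝒜.Nonempty ∧ (∀ A ∈ 𝒜, A.Nonempty) ∧
    ∀ A ∈ 𝒜, A ≠ Set.univ →
      ∃ B ∈ 𝒜, ∃ f ∈ F, (∀ x ∈ B, f x = 0) ∧ ∀ x ∉ A, f x = 1

/-- A filter on the set `X`, viewed as a collection of subsets. -/
def IsSetFilter (φ : Set (Set X)) : Prop :=
  φ.Nonempty ∧ (∀ A ∈ φ, ∀ B ∈ φ, A ∩ B ∈ φ) ∧
    (∀ A ∈ φ, ∀ B : Set X, A ⊆ B → B ∈ φ) ∧ ∅ ∉ φ

/-- An `F`-filter on `X` is a filter which is also an `F`-family. -/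
def FFilter (F : StarSubalgebra ℂ (BoundedContinuousFunction X ℂ)) (φ : Set (Set X)) : Prop :=
  IsSetFilter φ ∧ FFamily F φ

/-- An `F`-ultrafilter on `X` is an `F`-filter maximal with respect to inclusion. -/
def FUltrafilter (F : StarSubalgebra ℂ (BoundedContinuousFunction X ℂ)) (φ : Set (Set X)) : Prop :=
  FFilter F φ ∧ ∀ ψ : Set (Set X), FFilter F ψ → φ ⊆ ψ → ψ = φ

/-- `F₀ = {f ∈ F : X(f,r) ≠ ∅ for all r > 0}`. -/
def FZero (F : StarSubalgebra ℂ (BoundedContinuousFunction X ℂ)) :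
    Set (BoundedContinuousFunction X ℂ) :=
  {f | f ∈ F ∧ ∀ r : ℝ, 0 < r → (XSet f r).Nonempty}

/-- `Z(A) = {f ∈ F : f(x) = 0 for all x ∈ A}`. -/
def ZSet (F : StarSubalgebra ℂ (BoundedContinuousFunction X ℂ)) (A : Set X) :
    Set (BoundedContinuousFunction X ℂ) :=
  {f | f ∈ F ∧ ∀ x ∈ A, f x = 0}

/-- The finite intersection property. -/
def FIP (𝒜 : Set (Set X)) : Prop :=
  ∀ s : Finset (Set X), ↑s ⊆ 𝒜 → s.Nonempty → (⋂₀ (s : Set (Set X))).Nonempty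

/-- A filter base on `X`. -/
def IsFilterBase (ℬ : Set (Set X)) : Prop :=
  ℬ.Nonempty ∧ ∅ ∉ ℬ ∧ ∀ A ∈ ℬ, ∀ B ∈ ℬ, ∃ C ∈ ℬ, C ⊆ A ∩ B

/-- The filter generated by a filter base. -/
def genFilter (ℬ : Set (Set X)) : Set (Set X) :=
  {A | ∃ B ∈ ℬ, B ⊆ A}

/-- `δX`, the space of all `F`-ultrafilters on `X`. -/
def Delta (F : StarSubalgebra ℂ (BoundedContinuousFunction X ℂ)) : Type _ :=
  {p : Set (Set X) // FUltrafilter F p}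

/-- `Â = {p ∈ δX : A ∈ p}`. -/
def hatSet (F : StarSubalgebra ℂ (BoundedContinuousFunction X ℂ)) (A : Set X) :
    Set (Delta F) :=
  {p | A ∈ p.1}

/-- The topology on `δX` having `{Â : A ⊆ X}` as a base. -/
instance (F : StarSubalgebra ℂ (BoundedContinuousFunction X ℂ)) :
    TopologicalSpace (Delta F) :=
  TopologicalSpace.generateFrom {S | ∃ A : Set X, S = hatSet F A}

/-- For an `F`-filter `φ`, `φ̂ = {p ∈ δX : φ ⊆ p}`. -/
def hatF (F : StarSubalgebra ℂ (BoundedContinuousFunction X ℂ)) (φ : Set (Set X)) :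
    Set (Delta F) :=
  {p | φ ⊆ p.1}

/-- `τ(F)`, the weakest topology on `X` making every member of `F` continuous. -/
noncomputable def tauF (F : StarSubalgebra ℂ (BoundedContinuousFunction X ℂ)) : TopologicalSpace X :=
  ⨅ f ∈ (F : Set (BoundedContinuousFunction X ℂ)),
    TopologicalSpace.induced (fun x => f x) inferInstance

/-- `B(I) = {X(f,r) : f ∈ I, r > 0}` for an ideal `I` of `F`. -/
def BIdeal (F : StarSubalgebra ℂ (BoundedContinuousFunction X ℂ)) (I : Ideal F) :
    Set (Set X) :=
  {S | ∃ f ∈ I, ∃ r : ℝ, 0 < r ∧ S = XSet (f : BoundedContinuousFunction X ℂ) r}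

/-!
Two facts about a closed `F` drive the proof. It is closed under the continuous functional
calculus, so applying the ramp `z ↦ min 1 (max 0 ((|z| - s) / (t - s)))` to `f ∈ F` gives a
member of `F` vanishing on `X(f,s)` and equal to `1` off `X(f,t)`. And the separation property of
an `F`-family survives supersets and finite intersections (`g₁ + g₂ - g₁ g₂` separates an
intersection), so a proper filter generated by sets separated from generated sets is an `F`-filter.

(i) ⇒ (ii): if every member of the ultrafilter met `X(f,t)`, adjoining all `X(f,u)`, `u > t`,
would generate a larger `F`-filter, containing `X(f,r)`. (iii) ⇒ (i): the filter generated by `φ`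
is an `F`-family with the finite intersection property, hence equals `φ`. (ii) ⇒ (iv): otherwise
each `Aₖ` carries `fₖ ∈ Z(Aₖ)` and a member of `φ` missing `X(fₖ, rₖ/2) ⊇ Aₖ`; these members
meet `⋃ Aₖ ∈ φ` nowhere. The other implications evaluate separating functions at levels `< 1`.
-/

open Filter

section SetFilter

variable {α : Type*} {φ 𝒜 : Set (Set α)} {A B : Set α}

def IsSetFilter.toFilter (h : IsSetFilter φ) : Filter α where
  sets := φ
  univ_sets := let ⟨A, hA⟩ := h.1; h.2.2.1 A hA _ (subset_univ A)
  sets_of_superset hA hAB := h.2.2.1 _ hA _ hAB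
  inter_sets hA hB := h.2.1 _ hA _ hB

theorem IsSetFilter.neBot_toFilter (h : IsSetFilter φ) : h.toFilter.NeBot :=
  ⟨fun hbot => h.2.2.2 (empty_mem_iff_bot.2 hbot)⟩

theorem IsSetFilter.univ_mem (h : IsSetFilter φ) : univ ∈ φ :=
  h.toFilter.univ_sets

theorem isSetFilter_sets (l : Filter α) [l.NeBot] : IsSetFilter l.sets :=
  ⟨⟨univ, univ_mem⟩, fun _ hA _ hB => inter_mem hA hB, fun _ hA _ hAB => mem_of_superset hA hAB,
    empty_notMem l⟩

theorem fip_of_subset_sets (l : Filter α) [l.NeBot] (h : 𝒜 ⊆ l.sets) : FIP 𝒜 :=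
  fun s hs _ => nonempty_of_mem ((sInter_mem s.finite_toSet).2 fun _ hU => h (hs hU))

theorem IsSetFilter.fip (h : IsSetFilter φ) : FIP φ :=
  haveI := h.neBot_toFilter
  fip_of_subset_sets h.toFilter subset_rfl

theorem FIP.inter_nonempty (h : FIP 𝒜) (hA : A ∈ 𝒜) (hB : B ∈ 𝒜) : (A ∩ B).Nonempty := by
  classical
  simpa using h {A, B} (by simp [insert_subset_iff, hA, hB]) (by simp)

theorem FIP.neBot_generate [Nonempty α] (h : FIP 𝒜) : (generate 𝒜).NeBot := by
  classical
  refine generate_neBot_iff.2 fun t ht hfin => ?_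
  rcases t.eq_empty_or_nonempty with rfl | hne
  · simp
  · simpa using h hfin.toFinset (by simpa using ht) (by simpa using hne)

end SetFilter

section Separation

variable {α : Type*} [TopologicalSpace α] {F : StarSubalgebra ℂ (BoundedContinuousFunction α ℂ)}
  {f : BoundedContinuousFunction α ℂ} {𝒜 : Set (Set α)} {A A' B B' : Set α} {s t : ℝ}

def FSeparated (F : StarSubalgebra ℂ (BoundedContinuousFunction α ℂ)) (B A : Set α) : Prop :=
  ∃ g ∈ F, (∀ x ∈ B, g x = 0) ∧ ∀ x ∉ A, g x = 1

theorem FSeparated.mono (hB : B' ⊆ B) (hA : A ⊆ A') : FSeparated F B A → FSeparated F B' A' :=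
  fun ⟨g, hg, hB0, hA1⟩ =>
    ⟨g, hg, fun x hx => hB0 x (hB hx), fun x hx => hA1 x fun h => hx (hA h)⟩

theorem FSeparated.inter {B₁ B₂ A₁ A₂ : Set α} :
    FSeparated F B₁ A₁ → FSeparated F B₂ A₂ → FSeparated F (B₁ ∩ B₂) (A₁ ∩ A₂) := by
  rintro ⟨g₁, hg₁, hB₁, hA₁⟩ ⟨g₂, hg₂, hB₂, hA₂⟩
  refine ⟨g₁ + g₂ - g₁ * g₂, sub_mem (add_mem hg₁ hg₂) (mul_mem hg₁ hg₂), ?_, fun x hx => ?_⟩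
  · rintro x ⟨hx₁, hx₂⟩
    simp [hB₁ x hx₁, hB₂ x hx₂]
  · by_cases hx₁ : x ∈ A₁
    · have hx₂ : x ∉ A₂ := fun hx₂ => hx ⟨hx₁, hx₂⟩
      simp [hA₂ x hx₂]
    · simp [hA₁ x hx₁]

theorem fSeparated_univ : FSeparated F B univ :=
  ⟨0, zero_mem F, fun _ _ => rfl, fun x hx => (hx (mem_univ x)).elim⟩

theorem FFamily.exists_fSeparated (h : FFamily F 𝒜) (hA : A ∈ 𝒜) : ∃ B ∈ 𝒜, FSeparated F B A := by
  by_cases hAu : A = univ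
  · exact ⟨A, hA, hAu ▸ fSeparated_univ⟩
  · exact h.2.2 A hA hAu

theorem exists_mem_generate_fSeparated (h : ∀ A ∈ 𝒜, ∃ B ∈ generate 𝒜, FSeparated F B A)
    (hA : A ∈ generate 𝒜) : ∃ B ∈ generate 𝒜, FSeparated F B A := by
  induction hA with
  | basic hA => exact h _ hA
  | univ => exact ⟨univ, univ_mem, fSeparated_univ⟩
  | superset _ hst ih =>
    obtain ⟨B, hB, hsep⟩ := ih
    exact ⟨B, hB, hsep.mono subset_rfl hst⟩
  | inter _ _ ih₁ ih₂ =>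
    obtain ⟨B₁, hB₁, hsep₁⟩ := ih₁
    obtain ⟨B₂, hB₂, hsep₂⟩ := ih₂
    exact ⟨B₁ ∩ B₂, inter_mem hB₁ hB₂, hsep₁.inter hsep₂⟩

theorem fFilter_generate [(generate 𝒜).NeBot]
    (h : ∀ A ∈ 𝒜, ∃ B ∈ generate 𝒜, FSeparated F B A) : FFilter F (generate 𝒜).sets :=
  ⟨isSetFilter_sets _, ⟨univ, univ_mem⟩, fun _ hA => nonempty_of_mem hA,
    fun _ hA _ => exists_mem_generate_fSeparated h hA⟩

theorem xSet_mono (f : BoundedContinuousFunction α ℂ) (hst : s ≤ t) : XSet f s ⊆ XSet f t :=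
  fun _ hx => le_trans hx hst

theorem subset_xSet_of_eq_zero (hB : ∀ x ∈ B, f x = 0) (ht : 0 ≤ t) : B ⊆ XSet f t := by
  intro x hx
  simpa [XSet, hB x hx] using ht

theorem xSet_subset_of_eq_one (hA : ∀ x ∉ A, f x = 1) (ht : t < 1) : XSet f t ⊆ A := by
  intro x hx
  by_contra hxA
  have : ‖f x‖ ≤ t := hx
  simp [hA x hxA] at this
  linarith

theorem BoundedContinuousFunction.cfc_apply_of_continuous {g : ℂ → ℂ} (hg : Continuous g)
    (f : BoundedContinuousFunction α ℂ) (x : α) : cfc g f x = g (f x) := by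
  let ev : BoundedContinuousFunction α ℂ →⋆ₐ[ℂ] ℂ :=
    (ContinuousMap.evalStarAlgHom ℂ ℂ x).comp (BoundedContinuousFunction.toContinuousMapStarₐ ℂ)
  calc cfc g f x = ev (cfc g f) := rfl
    _ = cfc g (f x) := StarAlgHomClass.map_cfc ev g f hg.continuousOn (map_continuous ev)
    _ = g (f x) := by simpa using cfc_algebraMap (A := ℂ) (f x) g

theorem fSeparated_xSet (hF : IsClosed (F : Set (BoundedContinuousFunction α ℂ))) (hf : f ∈ F)
    (hst : s < t) : FSeparated F (XSet f s) (XSet f t) := by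
  let ramp : ℂ → ℂ := fun z => ((max 0 (min 1 ((‖z‖ - s) / (t - s))) : ℝ) : ℂ)
  have hramp : Continuous ramp := by fun_prop
  refine ⟨cfc ramp f, cfc_mem (hs := hF) ramp hf, fun x hx => ?_, fun x hx => ?_⟩
  · have hle : (‖f x‖ - s) / (t - s) ≤ 0 :=
      div_nonpos_of_nonpos_of_nonneg (by linarith [show ‖f x‖ ≤ s from hx]) (by linarith)
    simp [BoundedContinuousFunction.cfc_apply_of_continuous hramp, ramp,
      max_eq_left ((min_le_right _ _).trans hle)]
  · have hge : 1 ≤ (‖f x‖ - s) / (t - s) := by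
      rw [le_div_iff₀ (by linarith)]
      linarith [show t < ‖f x‖ from not_le.1 hx]
    simp [BoundedContinuousFunction.cfc_apply_of_continuous hramp, ramp, min_eq_left hge]

end Separation

section Ultrafilter

variable {α : Type*} [TopologicalSpace α] {F : StarSubalgebra ℂ (BoundedContinuousFunction α ℂ)}
  {f : BoundedContinuousFunction α ℂ} {φ ψ : Set (Set α)} {r t : ℝ}

theorem neBot_generate_union_image_xSet (hφ : IsSetFilter φ)
    (hmeet : ∀ A ∈ φ, (XSet f t ∩ A).Nonempty) : (generate (φ ∪ XSet f '' Ioi t)).NeBot := by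
  refine generate_neBot_iff.2 fun s hs hfin => ?_
  have hmem : ⋂₀ (s ∩ φ) ∈ hφ.toFilter :=
    (sInter_mem (hfin.subset inter_subset_left)).2 fun _ hU => hU.2
  refine (hmeet _ hmem).mono ?_
  rintro x ⟨hxt, hx⟩ U hU
  rcases hs hU with hUφ | ⟨u, hu, rfl⟩
  · exact hx U ⟨hU, hUφ⟩
  · exact xSet_mono f (le_of_lt hu) hxt

theorem FUltrafilter.exists_xSet_inter_eq_empty
    (hF : IsClosed (F : Set (BoundedContinuousFunction α ℂ))) (h : FUltrafilter F φ) (hf : f ∈ F)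
    (hr : XSet f r ∉ φ) (htr : t < r) :
    ∃ A ∈ φ, XSet f t ∩ A = ∅ := by
  by_contra! hmeet
  have := neBot_generate_union_image_xSet h.1.1 hmeet
  have hsep : ∀ A ∈ φ ∪ XSet f '' Ioi t,
      ∃ B ∈ generate (φ ∪ XSet f '' Ioi t), FSeparated F B A := by
    rintro A (hA | ⟨u, hu : t < u, rfl⟩)
    · obtain ⟨B, hB, hsep⟩ := h.1.2.exists_fSeparated hA
      exact ⟨B, mem_generate_of_mem (Or.inl hB), hsep⟩
    · refine ⟨XSet f ((t + u) / 2), mem_generate_of_mem (Or.inr ⟨_, ?_, rfl⟩),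
        fSeparated_xSet hF hf (by linarith)⟩
      exact mem_Ioi.2 (by linarith)
  have heq := h.2 _ (fFilter_generate hsep) fun A hA => mem_generate_of_mem (Or.inl hA)
  exact hr (heq ▸ mem_generate_of_mem (Or.inr ⟨r, htr, rfl⟩))

theorem FFamily.eq_of_fip_of_superset (hφ : IsSetFilter φ)
    (hφF : ∀ f ∈ F, ∀ r : ℝ, 0 < r → XSet f r ∉ φ →
      ∀ t : ℝ, 0 < t → t < r → ∃ A ∈ φ, XSet f t ∩ A = ∅)
    (hψ : FFamily F ψ) (hfip : FIP ψ) (hle : φ ⊆ ψ) : ψ = φ := by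
  refine subset_antisymm (fun C hC => ?_) hle
  obtain ⟨B, hB, f, hf, hB0, hC1⟩ := hψ.exists_fSeparated hC
  have hX : XSet f (2 / 3) ∈ φ := by
    by_contra hX
    obtain ⟨A, hA, hdisj⟩ := hφF f hf _ (by norm_num) hX (1 / 2) (by norm_num) (by norm_num)
    obtain ⟨x, hxB, hxA⟩ := hfip.inter_nonempty hB (hle hA)
    exact eq_empty_iff_forall_notMem.1 hdisj x
      ⟨subset_xSet_of_eq_zero hB0 (by norm_num) hxB, hxA⟩
  exact hφ.2.2.1 _ hX _ (xSet_subset_of_eq_one hC1 (by norm_num))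

theorem fUltrafilter_of_maximal_fip [Nonempty α] (hfam : FFamily F φ) (hfip : FIP φ)
    (hmax : ∀ ψ : Set (Set α), FFamily F ψ → FIP ψ → φ ⊆ ψ → ψ = φ) : FUltrafilter F φ := by
  have := hfip.neBot_generate
  have hgen : FFilter F (generate φ).sets :=
    fFilter_generate fun A hA =>
      let ⟨B, hB, hsep⟩ := hfam.exists_fSeparated hA
      ⟨B, mem_generate_of_mem hB, hsep⟩
  have heq : (generate φ).sets = φ :=
    hmax _ hgen.2 (fip_of_subset_sets _ subset_rfl) fun A hA => mem_generate_of_mem hA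
  exact ⟨⟨heq ▸ hgen.1, hfam⟩, fun ψ hψ hle => hmax ψ hψ.2 hψ.1.fip hle⟩

theorem exists_forall_xSet_mem_of_iUnion_mem (hφ : IsSetFilter φ)
    (hφF : ∀ f ∈ F, ∀ r : ℝ, 0 < r → XSet f r ∉ φ →
      ∀ t : ℝ, 0 < t → t < r → ∃ A ∈ φ, XSet f t ∩ A = ∅)
    {ι : Type*} [Finite ι] (A : ι → Set α) (hA : (⋃ k, A k) ∈ φ) :
    ∃ k, ∀ f ∈ ZSet F (A k), ∀ r : ℝ, 0 < r → XSet f r ∈ φ := by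
  by_contra! hnot
  choose f hf r hr hXr using hnot
  choose A' hA' hdisj using fun k =>
    hφF (f k) (hf k).1 (r k) (hr k) (hXr k) (r k / 2) (half_pos (hr k)) (half_lt_self (hr k))
  obtain ⟨x, hxA, hxA'⟩ := hφ.fip.inter_nonempty hA ((iInter_mem (f := hφ.toFilter)).2 hA')
  obtain ⟨k, hxk⟩ := mem_iUnion.1 hxA
  exact eq_empty_iff_forall_notMem.1 (hdisj k) x
    ⟨subset_xSet_of_eq_zero (hf k).2 (half_pos (hr k)).le hxk, mem_iInter.1 hxA' k⟩

theorem FFilter.subset_of_superset_of_dichotomy (hφ : IsSetFilter φ)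
    (hφF : ∀ A : Set α, A.Nonempty → A ≠ univ →
      (∀ f ∈ ZSet F A, ∀ r : ℝ, 0 < r → XSet f r ∈ φ) ∨
      (∀ g ∈ ZSet F Aᶜ, ∀ r : ℝ, 0 < r → XSet g r ∈ φ))
    (hψ : FFilter F ψ) (hle : φ ⊆ ψ) : ψ ⊆ φ := by
  intro C hC
  obtain ⟨B, hB, f, hf, hB0, hC1⟩ := hψ.2.exists_fSeparated hC
  by_cases hBu : B = univ
  · have hCu : C = univ := eq_univ_of_forall fun x => by
      by_contra hx
      simpa [hB0 x (hBu ▸ mem_univ x)] using hC1 x hx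
    exact hCu ▸ hφ.univ_mem
  rcases hφF B (hψ.2.2.1 B hB) hBu with hZ | hZ
  · exact hφ.2.2.1 _ (hZ f ⟨hf, hB0⟩ (1 / 2) (by norm_num)) _
      (xSet_subset_of_eq_one hC1 (by norm_num))
  · obtain ⟨B', hB', g, hg, hB'0, hB1⟩ := hψ.2.2.2 B hB hBu
    -- `1 - g ∈ Z(Bᶜ)` equals `1` on `B'`, so its sublevel set in `φ ⊆ ψ` misses `B' ∈ ψ`.
    have hX : XSet (1 - g) (1 / 2) ∈ ψ :=
      hle (hZ (1 - g) ⟨sub_mem (one_mem F) hg, fun x hx => by simp [hB1 x hx]⟩ _ (by norm_num))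
    have hXB' : XSet (1 - g) (1 / 2) ⊆ B'ᶜ :=
      xSet_subset_of_eq_one (fun x hx => by simp [hB'0 x (not_not.1 hx)]) (by norm_num)
    obtain ⟨x, hxX, hxB'⟩ := hψ.1.fip.inter_nonempty hX hB'
    exact (hXB' hxX hxB').elim

end Ultrafilter

theorem stmt4 (F : StarSubalgebra ℂ (BoundedContinuousFunction X ℂ)) (hF : IsClosed (F : Set (BoundedContinuousFunction X ℂ))) (φ : Set (Set X)) :
    List.TFAE
      [FUltrafilter F φ,
       FFilter F φ ∧ ∀ f ∈ F, ∀ r : ℝ, 0 < r → XSet f r ∉ φ →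
         ∀ t : ℝ, 0 < t → t < r → ∃ A ∈ φ, XSet f t ∩ A = ∅,
       (FFamily F φ ∧ FIP φ) ∧
         ∀ ψ : Set (Set X), FFamily F ψ → FIP ψ → φ ⊆ ψ → ψ = φ,
       FFilter F φ ∧ ∀ n : ℕ, ∀ A : Fin (n + 1) → Set X, (⋃ k, A k) ∈ φ →
         ∃ k, ∀ f ∈ ZSet F (A k), ∀ r : ℝ, 0 < r → XSet f r ∈ φ,
       FFilter F φ ∧ ∀ A : Set X, A.Nonempty → A ≠ Set.univ →
         (∀ f ∈ ZSet F A, ∀ r : ℝ, 0 < r → XSet f r ∈ φ) ∨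
         (∀ g ∈ ZSet F Aᶜ, ∀ r : ℝ, 0 < r → XSet g r ∈ φ)] := by
  tfae_have 1 → 2 := fun h =>
    ⟨h.1, fun _ hf _ _ hr _ _ htr => h.exists_xSet_inter_eq_empty hF hf hr htr⟩
  tfae_have 2 → 3 := fun ⟨hφ, h2⟩ =>
    ⟨⟨hφ.2, hφ.1.fip⟩, fun _ hψ hfip hle => hψ.eq_of_fip_of_superset hφ.1 h2 hfip hle⟩
  tfae_have 3 → 1 := fun ⟨⟨hfam, hfip⟩, hmax⟩ => fUltrafilter_of_maximal_fip hfam hfip hmax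
  tfae_have 2 → 4 := fun ⟨hφ, h2⟩ =>
    ⟨hφ, fun _ A hA => exists_forall_xSet_mem_of_iUnion_mem hφ.1 h2 A hA⟩
  tfae_have 4 → 5 := by
    rintro ⟨hφ, h4⟩
    refine ⟨hφ, fun A _ _ => ?_⟩
    have hcover : (⋃ k, ![A, Aᶜ] k) ∈ φ := by
      have : (⋃ k, ![A, Aᶜ] k) = univ := by
        simpa [Fin.exists_fin_two, iUnion_eq_univ_iff] using fun x => em (x ∈ A)
      exact this ▸ hφ.1.univ_mem
    obtain ⟨k, hk⟩ := h4 1 ![A, Aᶜ] hcover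
    fin_cases k
    exacts [Or.inl hk, Or.inr hk]
  tfae_have 5 → 1 := fun ⟨hφ, h5⟩ =>
    ⟨hφ, fun _ hψ hle => subset_antisymm (hψ.subset_of_superset_of_dichotomy hφ.1 h5 hle) hle⟩
  tfae_finish
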